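/- (Theorem 2, equality case) Assume E y_j ≠ E y_k for all j ≠ k; assume that for every pair j < k and every i ∈ N_j ∪ N_k, one has ⟪E v, h i⟫ < max(⟪E y_j, h i⟫, ⟪E y_k, h i⟫) for all v ∈ V with v ∉ {y_j, y_k}; and assume that for every pair j < k the unit vector (E y_j − E y_k)/‖E y_j − E y_k‖ attains the pairwise maximum separability, i.e. S_{j,k}((E y_j − E y_k)/‖E y_j − E y_k‖) = S*_{j,k}. Then Acc = (1/(n·(m−1)))·Σ_{1 ≤ j < k ≤ m} (|N_j| + |N_k|)·S*_{j,k}. -/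

import Mathlib

open Finset

/-
For `j < k`, rescaling by `‖E y_j - E y_k‖⁻¹` does not change signs, so
`(|N_j| + |N_k|) · S*_{j,k}` counts the points of `N_j ∪ N_k` whose own label beats the other
label of the pair (logits compared, ties going to the smaller index). Summing over all pairs
counts, for every point, the rival labels that its label beats. The dominance hypothesis makes
this all or nothing: if the label `κ` of `i` lost to some `l` but beat some `j`, then `l` would
be a third token above `max(⟪E y_j, h i⟫, ⟪E y_κ, h i⟫)`. Hence each point contributes `m - 1`
when it is correctly classified and `0` otherwise.
-/

/-- The pairwise separability of the hidden states `h` with respect to label tokens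
`a, b` along direction `u`:
`S_{a,b}(u) = (1/(|N_a| + |N_b|)) · (|{i ∈ N_a | ⟪u, h i⟫ ≥ 0}| + |{i ∈ N_b | ⟪u, h i⟫ < 0}|)`. -/
noncomputable def sepPair {d n : ℕ} {V : Type*} [DecidableEq V]
    (h : Fin n → EuclideanSpace ℝ (Fin d)) (y : Fin n → V) (a b : V)
    (u : EuclideanSpace ℝ (Fin d)) : ℝ :=
  (1 / (((univ.filter fun i => y i = a).card : ℝ) +
        ((univ.filter fun i => y i = b).card : ℝ))) *
    (((univ.filter fun i => y i = a ∧ 0 ≤ (inner ℝ u (h i) : ℝ)).card : ℝ) +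
     ((univ.filter fun i => y i = b ∧ (inner ℝ u (h i) : ℝ) < 0).card : ℝ))

/-- The pairwise maximum separability `S*_{a,b} = sup {S_{a,b}(u) | ‖u‖ = 1}`. -/
noncomputable def sepPairSup {d n : ℕ} {V : Type*} [DecidableEq V]
    (h : Fin n → EuclideanSpace ℝ (Fin d)) (y : Fin n → V) (a b : V) : ℝ :=
  sSup {r : ℝ | ∃ u : EuclideanSpace ℝ (Fin d), ‖u‖ = 1 ∧ sepPair h y a b u = r}

/-- Index `i` with `y i = t k` is correctly classified (ties among the labels
`t 0, …, t (m-1)` broken toward the smaller index): `⟪E (t k), h i⟫ > ⟪E (t j), h i⟫` for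
all `j < k`, `⟪E (t k), h i⟫ ≥ ⟪E (t j), h i⟫` for all `j > k`, and
`⟪E (t k), h i⟫ > ⟪E v, h i⟫` for every `v` outside `{t 0, …, t (m-1)}`. -/
def mcorrect {d n m : ℕ} {V : Type*} (E : V → EuclideanSpace ℝ (Fin d))
    (h : Fin n → EuclideanSpace ℝ (Fin d)) (y : Fin n → V) (t : Fin m → V)
    (i : Fin n) : Prop :=
  ∃ k : Fin m, y i = t k ∧
    (∀ j : Fin m, j < k → (inner ℝ (E (t j)) (h i) : ℝ) < (inner ℝ (E (t k)) (h i) : ℝ)) ∧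
    (∀ j : Fin m, k < j → (inner ℝ (E (t j)) (h i) : ℝ) ≤ (inner ℝ (E (t k)) (h i) : ℝ)) ∧
    (∀ v : V, (∀ j : Fin m, v ≠ t j) → (inner ℝ (E v) (h i) : ℝ) < (inner ℝ (E (t k)) (h i) : ℝ))

noncomputable instance {d n m : ℕ} {V : Type*} [Fintype V] [DecidableEq V]
    (E : V → EuclideanSpace ℝ (Fin d)) (h : Fin n → EuclideanSpace ℝ (Fin d))
    (y : Fin n → V) (t : Fin m → V) : DecidablePred (mcorrect E h y t) := fun i => by
  unfold mcorrect; infer_instance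

/-- The multiclass accuracy `Acc = (1/n) · |{i | i is correctly classified}|`. -/
noncomputable def macc {d n m : ℕ} {V : Type*} [Fintype V] [DecidableEq V]
    (E : V → EuclideanSpace ℝ (Fin d)) (h : Fin n → EuclideanSpace ℝ (Fin d))
    (y : Fin n → V) (t : Fin m → V) : ℝ :=
  (1 / (n : ℝ)) * ((univ.filter fun i => mcorrect E h y t i).card : ℝ)

/-- `Beats c k j`: label `k` wins against label `j` under the scores `c`, ties going to the
smaller index. -/
def Beats {ι α : Type*} [LT ι] [LT α] [LE α] (c : ι → α) (k j : ι) : Prop :=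
  (j < k → c j < c k) ∧ (k < j → c j ≤ c k)

instance {ι α : Type*} [LinearOrder ι] [LinearOrder α] (c : ι → α) (k j : ι) :
    Decidable (Beats c k j) := by
  unfold Beats; infer_instance

section Beats

variable {ι α : Type*} {c : ι → α} {j k : ι}

theorem Beats.refl [Preorder ι] [Preorder α] (c : ι → α) (k : ι) : Beats c k k :=
  ⟨fun h => absurd h (lt_irrefl k), fun h => absurd h (lt_irrefl k)⟩

theorem Beats.le [LinearOrder ι] [Preorder α] (hkj : Beats c k j) : c j ≤ c k := by
  rcases lt_trichotomy j k with hjk | rfl | hkj'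
  · exact (hkj.1 hjk).le
  · exact le_rfl
  · exact hkj.2 hkj'

theorem le_of_not_beats [Preorder ι] [LinearOrder α] (hkj : ¬Beats c k j) : c k ≤ c j := by
  by_contra! hlt
  exact hkj ⟨fun _ => hlt, fun _ => hlt.le⟩

theorem beats_iff_le_of_lt [Preorder ι] [Preorder α] (hjk : j < k) : Beats c j k ↔ c k ≤ c j :=
  ⟨fun h => h.2 hjk, fun h => ⟨fun hkj => absurd hjk (lt_asymm hkj), fun _ => h⟩⟩

theorem beats_iff_lt_of_lt [Preorder ι] [Preorder α] (hjk : j < k) : Beats c k j ↔ c j < c k :=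
  ⟨fun h => h.1 hjk, fun h => ⟨fun _ => h, fun hkj => absurd hjk (lt_asymm hkj)⟩⟩

theorem beats_all_or_none [LinearOrder ι] [LinearOrder α] {κ : ι}
    (hdom : ∀ j l, j ≠ κ → l ≠ j → l ≠ κ → c l < max (c j) (c κ)) :
    (∀ j, Beats c κ j) ∨ ∀ j ≠ κ, ¬Beats c κ j := by
  refine or_iff_not_imp_left.2 fun hall j hjκ hj => ?_
  obtain ⟨l, hl⟩ := not_forall.1 hall
  have hlκ : l ≠ κ := fun h => hl (h ▸ Beats.refl c κ)
  have hlj : l ≠ j := fun h => hl (h ▸ hj)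
  have hlt := hdom j l hjκ hlj hlκ
  rw [max_eq_right hj.le] at hlt
  exact (le_of_not_beats hl).not_gt hlt

theorem card_filter_beats [LinearOrder ι] [Fintype ι] [LinearOrder α] {κ : ι}
    (hdom : ∀ j l, j ≠ κ → l ≠ j → l ≠ κ → c l < max (c j) (c κ)) :
    #{j | κ ≠ j ∧ Beats c κ j} = if ∀ j, Beats c κ j then Fintype.card ι - 1 else 0 := by
  by_cases hall : ∀ j, Beats c κ j
  · rw [if_pos hall, filter_congr fun j _ => and_iff_left (hall j), filter_ne,
      card_erase_of_mem (mem_univ κ), card_univ]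
  · have hnone := (beats_all_or_none hdom).resolve_left hall
    rw [if_neg hall, card_eq_zero, filter_eq_empty_iff]
    exact fun j _ ⟨hκj, hj⟩ => hnone j hκj.symm hj

end Beats

theorem sum_sum_ite_lt_add_swap {ι M : Type*} [LinearOrder ι] [Fintype ι] [AddCommMonoid M]
    (f : ι → ι → M) :
    ∑ j, ∑ k, (if j < k then f j k + f k j else 0) = ∑ j, ∑ k, if j ≠ k then f j k else 0 := by
  have hsplit : ∀ j k, (if j < k then f j k + f k j else 0) =
      (if j < k then f j k else 0) + (if j < k then f k j else 0) := fun j k => by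
    split_ifs <;> simp
  have hswap : ∑ j, ∑ k, (if j < k then f k j else 0) = ∑ j, ∑ k, if k < j then f j k else 0 :=
    sum_comm
  calc ∑ j, ∑ k, (if j < k then f j k + f k j else 0)
      = ∑ j, ∑ k, ((if j < k then f j k else 0) + if k < j then f j k else 0) := by
        simp only [hsplit, sum_add_distrib, hswap]
    _ = ∑ j, ∑ k, if j ≠ k then f j k else 0 := by
        refine sum_congr rfl fun j _ => sum_congr rfl fun k _ => ?_
        rcases lt_trichotomy j k with h | rfl | h
        · simp [h, h.ne, h.not_gt]
        · simp
        · simp [h, h.ne', h.not_gt]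

section Normalize

variable {F : Type*} [NormedAddCommGroup F] [InnerProductSpace ℝ F] (w x : F)

theorem inner_inv_norm_smul_nonneg_iff : 0 ≤ inner ℝ (‖w‖⁻¹ • w) x ↔ 0 ≤ inner ℝ w x := by
  rcases eq_or_ne w 0 with rfl | hw
  · simp
  · rw [real_inner_smul_left, mul_nonneg_iff_of_pos_left (inv_pos.2 (norm_pos_iff.2 hw))]

theorem inner_inv_norm_smul_neg_iff : inner ℝ (‖w‖⁻¹ • w) x < 0 ↔ inner ℝ w x < 0 := by
  simpa only [not_le] using (inner_inv_norm_smul_nonneg_iff w x).not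

end Normalize

theorem card_add_card_mul_sepPair {d n : ℕ} {V : Type*} [DecidableEq V]
    (h : Fin n → EuclideanSpace ℝ (Fin d)) (y : Fin n → V) (a b : V)
    (u : EuclideanSpace ℝ (Fin d)) :
    ((#{i | y i = a} : ℝ) + #{i | y i = b}) * sepPair h y a b u =
      #{i | y i = a ∧ 0 ≤ inner ℝ u (h i)} + #{i | y i = b ∧ inner ℝ u (h i) < 0} := by
  rcases eq_or_ne ((#{i | y i = a} : ℝ) + #{i | y i = b}) 0 with h0 | h0
  · have hab : #{i | y i = a} = 0 ∧ #{i | y i = b} = 0 := by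
      exact_mod_cast add_eq_zero_iff_of_nonneg (Nat.cast_nonneg _) (Nat.cast_nonneg _) |>.1 h0
    simp only [card_eq_zero, filter_eq_empty_iff, mem_univ, true_implies] at hab
    simp [hab.1, hab.2]
  · rw [sepPair, ← mul_assoc, mul_one_div_cancel h0, one_mul]

noncomputable def labelLogits {d n m : ℕ} {V : Type*} (E : V → EuclideanSpace ℝ (Fin d))
    (h : Fin n → EuclideanSpace ℝ (Fin d)) (t : Fin m → V) (i : Fin n) (j : Fin m) : ℝ :=
  inner ℝ (E (t j)) (h i)

def PairDominates {d n m : ℕ} {V : Type*} (E : V → EuclideanSpace ℝ (Fin d))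
    (h : Fin n → EuclideanSpace ℝ (Fin d)) (y : Fin n → V) (t : Fin m → V) : Prop :=
  ∀ j k : Fin m, j < k → ∀ i : Fin n, (y i = t j ∨ y i = t k) →
    ∀ v : V, v ≠ t j → v ≠ t k →
      inner ℝ (E v) (h i) < max (labelLogits E h t i j) (labelLogits E h t i k)

noncomputable def winCount {d n m : ℕ} {V : Type*} [DecidableEq V]
    (E : V → EuclideanSpace ℝ (Fin d)) (h : Fin n → EuclideanSpace ℝ (Fin d)) (y : Fin n → V)
    (t : Fin m → V) (j k : Fin m) : ℕ :=
  #{i | y i = t j ∧ Beats (labelLogits E h t i) j k}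

section Classifier

variable {d n m : ℕ} {V : Type*} {E : V → EuclideanSpace ℝ (Fin d)}
  {h : Fin n → EuclideanSpace ℝ (Fin d)} {y : Fin n → V} {t : Fin m → V}

theorem card_add_card_mul_sepPair_eq_winCount [DecidableEq V] {j k : Fin m} (hjk : j < k) :
    ((#{i | y i = t j} : ℝ) + #{i | y i = t k}) *
        sepPair h y (t j) (t k) (‖E (t j) - E (t k)‖⁻¹ • (E (t j) - E (t k))) =
      winCount E h y t j k + winCount E h y t k j := by
  rw [card_add_card_mul_sepPair, winCount, winCount]
  congr 3 <;> refine filter_congr fun i _ => and_congr_right fun _ => ?_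
  · rw [inner_inv_norm_smul_nonneg_iff, inner_sub_left, sub_nonneg, beats_iff_le_of_lt hjk]
    rfl
  · rw [inner_inv_norm_smul_neg_iff, inner_sub_left, sub_neg, beats_iff_lt_of_lt hjk]
    rfl

theorem PairDominates.inner_lt_max (hdom : PairDominates E h y t) {i : Fin n} {κ j : Fin m}
    (hκ : y i = t κ) (hjκ : j ≠ κ) {v : V} (hvj : v ≠ t j) (hvκ : v ≠ t κ) :
    inner ℝ (E v) (h i) < max (labelLogits E h t i j) (labelLogits E h t i κ) := by
  rcases hjκ.lt_or_gt with hlt | hgt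
  · exact hdom j κ hlt i (Or.inr hκ) v hvj hvκ
  · rw [max_comm]
    exact hdom κ j hgt i (Or.inl hκ) v hvκ hvj

theorem mcorrect_iff_forall_beats (hm : 2 ≤ m) (ht : Function.Injective t)
    (hdom : PairDominates E h y t) {i : Fin n} {κ : Fin m} (hκ : y i = t κ) :
    mcorrect E h y t i ↔ ∀ j, Beats (labelLogits E h t i) κ j := by
  constructor
  · rintro ⟨k, hk, hlt, hle, -⟩
    obtain rfl : k = κ := ht (hk.symm.trans hκ)
    exact fun j => ⟨hlt j, hle j⟩
  · intro hall
    refine ⟨κ, hκ, fun j => (hall j).1, fun j => (hall j).2, fun v hv => ?_⟩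
    have : Nontrivial (Fin m) := Fin.nontrivial_iff_two_le.2 hm
    obtain ⟨j, hjκ⟩ := exists_ne κ
    have hlt := hdom.inner_lt_max hκ hjκ (hv j) (hv κ)
    rwa [max_eq_right (hall j).le] at hlt

theorem sum_sum_beats_indicator_eq [Fintype V] [DecidableEq V] (hm : 2 ≤ m)
    (ht : Function.Injective t) (hdom : PairDominates E h y t) (i : Fin n) :
    ∑ j, ∑ k, (if y i = t j ∧ j ≠ k ∧ Beats (labelLogits E h t i) j k then 1 else 0 : ℝ) =
      ((m : ℝ) - 1) * if mcorrect E h y t i then 1 else 0 := by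
  by_cases hlab : ∃ κ, y i = t κ
  · obtain ⟨κ, hκ⟩ := hlab
    have hlabel : ∀ j, y i = t j ↔ j = κ := fun j =>
      ⟨fun hj => ht (hj.symm.trans hκ), by rintro rfl; exact hκ⟩
    have hdomκ : ∀ j l, j ≠ κ → l ≠ j → l ≠ κ →
        labelLogits E h t i l < max (labelLogits E h t i j) (labelLogits E h t i κ) :=
      fun j l hjκ hlj hlκ => hdom.inner_lt_max hκ hjκ (ht.ne hlj) (ht.ne hlκ)
    rw [Fintype.sum_eq_single κ fun j hjκ =>
      sum_eq_zero fun k _ => if_neg fun hj => hjκ ((hlabel j).1 hj.1)]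
    simp only [hκ, true_and]
    rw [sum_boole, card_filter_beats hdomκ]
    simp only [mcorrect_iff_forall_beats hm ht hdom hκ, Fintype.card_fin]
    split_ifs <;> simp [Nat.cast_sub (one_le_two.trans hm)]
  · have hnc : ¬mcorrect E h y t i := fun ⟨κ, hκ, _⟩ => hlab ⟨κ, hκ⟩
    push Not at hlab
    simp [hlab, hnc]

theorem sum_sum_ite_ne_winCount [Fintype V] [DecidableEq V] (hm : 2 ≤ m)
    (ht : Function.Injective t) (hdom : PairDominates E h y t) :
    ∑ j, ∑ k, (if j ≠ k then (winCount E h y t j k : ℝ) else 0) =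
      ((m : ℝ) - 1) * #{i | mcorrect E h y t i} := by
  have hcount : ∀ j k, (if j ≠ k then (winCount E h y t j k : ℝ) else 0) =
      ∑ i, if y i = t j ∧ j ≠ k ∧ Beats (labelLogits E h t i) j k then 1 else 0 := by
    intro j k
    split_ifs with hjk <;> simp [winCount, hjk]
  simp only [hcount]
  rw [sum_congr rfl fun j _ => sum_comm, sum_comm,
    sum_congr rfl fun i _ => sum_sum_beats_indicator_eq hm ht hdom i, ← mul_sum, sum_boole]

end Classifier

theorem stmt_9_general {d n m : ℕ} (hm : 2 ≤ m)
    {V : Type*} [Fintype V] [DecidableEq V]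
    (E : V → EuclideanSpace ℝ (Fin d))
    (h : Fin n → EuclideanSpace ℝ (Fin d)) (y : Fin n → V)
    (t : Fin m → V) (ht : Function.Injective t)
    (hdom : ∀ j k : Fin m, j < k → ∀ i : Fin n, (y i = t j ∨ y i = t k) →
      ∀ v : V, v ≠ t j → v ≠ t k →
        (inner ℝ (E v) (h i) : ℝ) <
          max (inner ℝ (E (t j)) (h i) : ℝ) (inner ℝ (E (t k)) (h i) : ℝ))
    (hatt : ∀ j k : Fin m, j < k →
      sepPair h y (t j) (t k) (‖E (t j) - E (t k)‖⁻¹ • (E (t j) - E (t k))) =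
        sepPairSup h y (t j) (t k)) :
    macc E h y t =
      (1 / ((n : ℝ) * ((m : ℝ) - 1))) *
        ∑ j : Fin m, ∑ k : Fin m,
          if j < k then
            (((univ.filter fun i => y i = t j).card : ℝ) +
             ((univ.filter fun i => y i = t k).card : ℝ)) *
              sepPairSup h y (t j) (t k)
          else 0 := by
  have hpair : ∀ j k : Fin m, (if j < k then
      ((#{i | y i = t j} : ℝ) + #{i | y i = t k}) * sepPairSup h y (t j) (t k) else 0) =
        if j < k then (winCount E h y t j k : ℝ) + winCount E h y t k j else 0 := by
    intro j k
    split_ifs with hjk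
    · rw [← hatt j k hjk, card_add_card_mul_sepPair_eq_winCount hjk]
    · rfl
  have hm1 : (m : ℝ) - 1 ≠ 0 := by
    have : (2 : ℝ) ≤ m := by exact_mod_cast hm
    linarith
  simp only [hpair]
  rw [sum_sum_ite_lt_add_swap, sum_sum_ite_ne_winCount hm ht hdom, macc, one_div_mul_eq_div,
    one_div_mul_eq_div, mul_comm ((m : ℝ) - 1), mul_div_mul_right _ _ hm1]

/-- (Theorem 2, equality case) Assume the label unembedding vectors are pairwise distinct;
assume for every pair `j < k` and every `i ∈ N_j ∪ N_k` that every token `v` outside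
`{t j, t k}` satisfies `⟪E v, h i⟫ < max (⟪E (t j), h i⟫) (⟪E (t k), h i⟫)`; and assume
for every pair `j < k` that the unit vector `(E (t j) − E (t k))/‖E (t j) − E (t k)‖`
attains the pairwise maximum separability `S*_{j,k}`.  Then
`Acc = (1/(n·(m−1))) · Σ_{j < k} (|N_j| + |N_k|) · S*_{j,k}`. -/
theorem stmt_9 {d n m : ℕ} (hd : 1 ≤ d) (hn : 1 ≤ n) (hm : 2 ≤ m)
    {V : Type*} [Fintype V] [DecidableEq V]
    (E : V → EuclideanSpace ℝ (Fin d))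
    (h : Fin n → EuclideanSpace ℝ (Fin d)) (y : Fin n → V)
    (t : Fin m → V) (ht : Function.Injective t)
    (hy : ∀ i : Fin n, ∃ j : Fin m, y i = t j)
    (hne : ∀ j : Fin m, ∃ i : Fin n, y i = t j)
    (hE : ∀ j k : Fin m, j ≠ k → E (t j) ≠ E (t k))
    (hdom : ∀ j k : Fin m, j < k → ∀ i : Fin n, (y i = t j ∨ y i = t k) →
      ∀ v : V, v ≠ t j → v ≠ t k →
        (inner ℝ (E v) (h i) : ℝ) <
          max (inner ℝ (E (t j)) (h i) : ℝ) (inner ℝ (E (t k)) (h i) : ℝ))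
    (hatt : ∀ j k : Fin m, j < k →
      sepPair h y (t j) (t k) (‖E (t j) - E (t k)‖⁻¹ • (E (t j) - E (t k))) =
        sepPairSup h y (t j) (t k)) :
    macc E h y t =
      (1 / ((n : ℝ) * ((m : ℝ) - 1))) *
        ∑ j : Fin m, ∑ k : Fin m,
          if j < k then
            (((univ.filter fun i => y i = t j).card : ℝ) +
             ((univ.filter fun i => y i = t k).card : ℝ)) *
              sepPairSup h y (t j) (t k)
          else 0 :=
  stmt_9_general hm E h y t ht hdom hatt
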